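/- The graph D is K_{2,4}-minor-free. -/
import Mathlib


namespace K24Paper

open SimpleGraph

/-- `H` is a minor of `G`: branch sets indexed by vertices of `H`, pairwise disjoint,
each inducing a connected subgraph of `G`, with every edge of `H` realized by an edge
of `G` between the corresponding branch sets. -/
def IsMinor {W V : Type*} (H : SimpleGraph W) (G : SimpleGraph V) : Prop :=
  ∃ B : W → Set V,
    (∀ w, (G.induce (B w)).Connected) ∧
    (∀ w₁ w₂, w₁ ≠ w₂ → Disjoint (B w₁) (B w₂)) ∧
    (∀ w₁ w₂, H.Adj w₁ w₂ → ∃ v₁ ∈ B w₁, ∃ v₂ ∈ B w₂, G.Adj v₁ v₂)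

/-- `G` is `H`-minor-free. -/
def MinorFree {W V : Type*} (H : SimpleGraph W) (G : SimpleGraph V) : Prop :=
  ¬ IsMinor H G

/-- The complete bipartite graph `K_{2,4}`. -/
def K24 : SimpleGraph (Fin 2 ⊕ Fin 4) := completeBipartiteGraph (Fin 2) (Fin 4)

/-- `G` is `k`-connected: more than `k` vertices, and removing fewer than `k`
vertices leaves a connected graph. -/
def KConnected {V : Type*} (k : ℕ) (G : SimpleGraph V) : Prop :=
  k < Nat.card V ∧ ∀ S : Set V, S.ncard < k → (G.induce Sᶜ).Connected

/-- The graph `G_{n,r,s}` (with the plus edge if `plus = true`), on vertices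
`0, …, n-1` corresponding to `v_1, …, v_n`:  the spine `v_1 v_2 ⋯ v_n`, the edges
`v_1 v_{n-i}` for `1 ≤ i ≤ r`, the edges `v_n v_{1+j}` for `1 ≤ j ≤ s`, and
(if `plus`) the plus edge `v_1 v_n`. -/
def Gnrs (n r s : ℕ) (plus : Bool) : SimpleGraph (Fin n) :=
  SimpleGraph.fromRel (fun a b =>
    b.val = a.val + 1 ∨
    (a.val = 0 ∧ n - 1 - r ≤ b.val ∧ b.val ≤ n - 2) ∨
    (b.val = n - 1 ∧ 1 ≤ a.val ∧ a.val ≤ s) ∨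
    (plus = true ∧ a.val = 0 ∧ b.val = n - 1))

/-- The parameter conditions describing membership in the class `𝒢`. -/
def Gparams (n r s : ℕ) (plus : Bool) : Prop :=
  (plus = true ∧ 4 ≤ n ∧ ((r = 1 ∧ s = n - 3) ∨ (r = n - 3 ∧ s = 1))) ∨
  (5 ≤ n ∧ 2 ≤ r ∧ r ≤ n - 3 ∧ 2 ≤ s ∧ s ≤ n - 3 ∧ (r + s = n - 2 ∨ r + s = n - 1))

/-- `G` belongs to `𝒢̃`, i.e. `G` is isomorphic to a graph of the class `𝒢`. -/
def InGtilde {V : Type*} (G : SimpleGraph V) : Prop :=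
  ∃ n r s plus, Gparams n r s plus ∧ Nonempty (G ≃g Gnrs n r s plus)

/-- The graph obtained from `G` by subdividing every edge in `F` once:
new vertices are the members of `F`. -/
def SubdivideEdges {V : Type*} (G : SimpleGraph V) (F : Set (Sym2 V)) :
    SimpleGraph (V ⊕ F) :=
  SimpleGraph.fromRel (fun a b =>
    match a, b with
    | Sum.inl u, Sum.inl v => G.Adj u v ∧ s(u, v) ∉ F
    | Sum.inl u, Sum.inr e => u ∈ (e : Sym2 V)
    | Sum.inr e, Sum.inl u => u ∈ (e : Sym2 V)
    | Sum.inr _, Sum.inr _ => False)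

/-- A set `F` of edges of a graph `G` is subdividable if subdividing every edge
of `F` once yields a `K_{2,4}`-minor-free graph. -/
def Subdividable {V : Type*} (G : SimpleGraph V) (F : Set (Sym2 V)) : Prop :=
  F ⊆ G.edgeSet ∧ MinorFree K24 (SubdivideEdges G F)

/-- `F` is a maximal subdividable set of edges of `G`. -/
def MaxSubdividable {V : Type*} (G : SimpleGraph V) (F : Set (Sym2 V)) : Prop :=
  Subdividable G F ∧ ∀ F', Subdividable G F' → F ⊆ F' → F' = F

/-- `l` lists vertices along a path of `G` (consecutive entries adjacent, no repeats)
such that no two edges of `G` cross with respect to this ordering. -/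
def OuterListing {U : Type*} (G : SimpleGraph U) (l : List U) : Prop :=
  l.Nodup ∧ l.Chain' G.Adj ∧
  ∀ (i k j m : ℕ) (h1 : i < k) (h2 : k < j) (h3 : j < m) (hm : m < l.length),
    ¬(G.Adj (l.get ⟨i, by omega⟩) (l.get ⟨j, by omega⟩) ∧
      G.Adj (l.get ⟨k, by omega⟩) (l.get ⟨m, by omega⟩))

/-- The graph `G` restricted to the vertex set `A` is `xy`-outerplanar: it has a
hamilton `xy`-path (listing exactly the vertices of `A`) such that no two edges
cross with respect to it. -/
def XYOuterplanar {U : Type*} (G : SimpleGraph U) (A : Set U) (x y : U) : Prop :=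
  ∃ l : List U, (∀ v, v ∈ l ↔ v ∈ A) ∧ l.head? = some x ∧ l.getLast? = some y ∧
    OuterListing G l

/-- A block: a connected graph with no cutvertex. -/
def IsBlock {V : Type*} (G : SimpleGraph V) : Prop :=
  G.Connected ∧ ∀ v : V, (G.induce {u | u ≠ v}).Preconnected

/-- `G + xy`: the graph `G` with the edge `xy` added (if not already present). -/
def AddEdge {U : Type*} (G : SimpleGraph U) (x y : U) : SimpleGraph U :=
  G ⊔ SimpleGraph.fromRel (fun a b => a = x ∧ b = y)

/-- A standard `K_{2,t}` minor `(R₁, R₂; S)` of `G`. -/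
def StdK2tMinor {V : Type*} (G : SimpleGraph V) (t : ℕ) (R₁ R₂ S : Set V) : Prop :=
  Disjoint R₁ R₂ ∧ Disjoint (R₁ ∪ R₂) S ∧
  (G.induce R₁).Connected ∧ (G.induce R₂).Connected ∧
  S.Finite ∧ S.ncard = t ∧
  ∀ v ∈ S, (∃ w ∈ R₁, G.Adj v w) ∧ (∃ w ∈ R₂, G.Adj v w)

/-- `K_{3,3}` with parts `{0,1,2}` and `{3,4,5}`. -/
def K33 : SimpleGraph (Fin 6) :=
  SimpleGraph.fromRel (fun a b => a.val < 3 ∧ 3 ≤ b.val)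

/-- The graph `A = K_{3,3} + v₂v₃`. -/
def GA : SimpleGraph (Fin 6) := AddEdge K33 1 2

/-- The graph `A⁺ = K_{3,3} + v₂v₃ + v₅v₆`. -/
def GAplus : SimpleGraph (Fin 6) := AddEdge GA 4 5

/-- The graph `B`, on vertices `h, r₁, r₂, r₃, r₄, g₁, g₂ = 0, …, 6`. -/
def GB : SimpleGraph (Fin 7) :=
  SimpleGraph.fromRel (fun a b => (a.val, b.val) ∈
    [(0,3),(0,4),(1,4),(2,3),(3,4),(5,0),(5,1),(5,2),(6,0),(6,1),(6,2)])

/-- The graph `B⁺ = B + g₁g₂`. -/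
def GBplus : SimpleGraph (Fin 7) := AddEdge GB 5 6

/-- The graph `C⁺`, on vertices `v₁, …, v₈ = 0, …, 7`. -/
def GCplus : SimpleGraph (Fin 8) :=
  SimpleGraph.fromRel (fun a b => (a.val, b.val) ∈
    [(0,1),(0,2),(1,2),(3,4),(3,5),(3,6),(3,7),(4,5),(4,6),(4,7),(2,5),(1,7),(0,6)])

/-- The graph `C = C⁺ ∖ v₄v₅`. -/
def GC : SimpleGraph (Fin 8) := GCplus.deleteEdges {s(3, 4)}

/-- The graph `D`, on vertices `t₁, t₂, t₃, d₁, d₂, d₃, g = 0, …, 6`. -/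
def GD : SimpleGraph (Fin 7) :=
  SimpleGraph.fromRel (fun a b => (a.val, b.val) ∈
    [(0,1),(0,2),(1,2),(3,4),(3,5),(4,5),(0,3),(1,4),(2,5),(6,0),(6,1),(6,2)])

/-- The complete graph `K₅`. -/
def GK5 : SimpleGraph (Fin 5) := completeGraph (Fin 5)

end K24Paper

namespace K24Paper
section AuxGD

open SimpleGraph

instance : DecidableRel GD.Adj := fun a b => by
  unfold GD SimpleGraph.fromRel; exact inferInstanceAs (Decidable (_ ∧ _))

instance : DecidableRel K24.Adj := fun a b => by
  unfold K24 completeBipartiteGraph; exact inferInstanceAs (Decidable (_ ∨ _))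

/-- If the graph induced on a two-element set is connected, the two vertices are adjacent. -/
lemma adj_of_connected_pair {V : Type*} {G : SimpleGraph V} {x y : V} (hxy : x ≠ y)
    (h : (G.induce ({x, y} : Set V)).Connected) : G.Adj x y := by
  by_contra hA
  have hbot : (G.induce ({x, y} : Set V)) = ⊥ := by
    ext a b
    simp only [SimpleGraph.bot_adj, iff_false]
    intro hab
    have hab' : G.Adj a.1 b.1 := by simpa using hab
    have ha := a.2; have hb := b.2
    simp only [Set.mem_insert_iff, Set.mem_singleton_iff] at ha hb
    rcases ha with ha | ha <;> rcases hb with hb | hb <;> rw [ha, hb] at hab'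
    · exact G.irrefl hab'
    · exact hA hab'
    · exact hA hab'.symm
    · exact G.irrefl hab'
  have hr := h.preconnected ⟨x, by simp⟩ ⟨y, by simp⟩
  rw [hbot] at hr
  exact hxy (congrArg Subtype.val (SimpleGraph.reachable_bot.mp hr))

/-- no `K_{2,4}` subgraph of `GD` -/
def P1 : Prop := ∃ a₀ a₁ : Fin 7, a₀ ≠ a₁ ∧
    ∃ b₀, (b₀ ≠ a₀ ∧ b₀ ≠ a₁ ∧ GD.Adj a₀ b₀ ∧ GD.Adj a₁ b₀) ∧
    ∃ b₁, (b₁ ≠ a₀ ∧ b₁ ≠ a₁ ∧ b₁ ≠ b₀ ∧ GD.Adj a₀ b₁ ∧ GD.Adj a₁ b₁) ∧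
    ∃ b₂, (b₂ ≠ a₀ ∧ b₂ ≠ a₁ ∧ b₂ ≠ b₀ ∧ b₂ ≠ b₁ ∧ GD.Adj a₀ b₂ ∧ GD.Adj a₁ b₂) ∧
    ∃ b₃, (b₃ ≠ a₀ ∧ b₃ ≠ a₁ ∧ b₃ ≠ b₀ ∧ b₃ ≠ b₁ ∧ b₃ ≠ b₂ ∧ GD.Adj a₀ b₃ ∧ GD.Adj a₁ b₃)

def P2L : Prop := ∃ x y : Fin 7, x ≠ y ∧ GD.Adj x y ∧
  ∃ a₁, (a₁ ≠ x ∧ a₁ ≠ y) ∧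
  ∃ b₀, (b₀ ≠ x ∧ b₀ ≠ y ∧ b₀ ≠ a₁ ∧ (GD.Adj x b₀ ∨ GD.Adj y b₀) ∧ GD.Adj a₁ b₀) ∧
  ∃ b₁, (b₁ ≠ x ∧ b₁ ≠ y ∧ b₁ ≠ a₁ ∧ b₁ ≠ b₀ ∧ (GD.Adj x b₁ ∨ GD.Adj y b₁) ∧ GD.Adj a₁ b₁) ∧
  ∃ b₂, (b₂ ≠ x ∧ b₂ ≠ y ∧ b₂ ≠ a₁ ∧ b₂ ≠ b₀ ∧ b₂ ≠ b₁ ∧ (GD.Adj x b₂ ∨ GD.Adj y b₂) ∧ GD.Adj a₁ b₂) ∧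
  ∃ b₃, (b₃ ≠ x ∧ b₃ ≠ y ∧ b₃ ≠ a₁ ∧ b₃ ≠ b₀ ∧ b₃ ≠ b₁ ∧ b₃ ≠ b₂ ∧ (GD.Adj x b₃ ∨ GD.Adj y b₃) ∧ GD.Adj a₁ b₃)

def P2R : Prop := ∃ x y : Fin 7, x ≠ y ∧ GD.Adj x y ∧
  ∃ a₀ a₁, (a₀ ≠ x ∧ a₀ ≠ y ∧ a₁ ≠ x ∧ a₁ ≠ y ∧ a₀ ≠ a₁ ∧
    (GD.Adj a₀ x ∨ GD.Adj a₀ y) ∧ (GD.Adj a₁ x ∨ GD.Adj a₁ y)) ∧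
  ∃ b₁, (b₁ ≠ x ∧ b₁ ≠ y ∧ b₁ ≠ a₀ ∧ b₁ ≠ a₁ ∧ GD.Adj a₀ b₁ ∧ GD.Adj a₁ b₁) ∧
  ∃ b₂, (b₂ ≠ x ∧ b₂ ≠ y ∧ b₂ ≠ a₀ ∧ b₂ ≠ a₁ ∧ b₂ ≠ b₁ ∧ GD.Adj a₀ b₂ ∧ GD.Adj a₁ b₂) ∧
  ∃ b₃, (b₃ ≠ x ∧ b₃ ≠ y ∧ b₃ ≠ a₀ ∧ b₃ ≠ a₁ ∧ b₃ ≠ b₁ ∧ b₃ ≠ b₂ ∧ GD.Adj a₀ b₃ ∧ GD.Adj a₁ b₃)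

set_option maxHeartbeats 4000000 in
set_option synthInstance.maxHeartbeats 2000000 in
set_option synthInstance.maxSize 4000 in
lemma notP : ¬ (P1 ∨ P2L ∨ P2R) := by
  unfold P1 P2L P2R; decide

lemma mkP1 (a₀ a₁ : Fin 7) (f : Fin 4 → Fin 7)
    (haa : a₀ ≠ a₁)
    (hba : ∀ j, f j ≠ a₀ ∧ f j ≠ a₁)
    (hbb : ∀ j k, j ≠ k → f j ≠ f k)
    (hadj : ∀ j, GD.Adj a₀ (f j) ∧ GD.Adj a₁ (f j)) : P1 :=
  ⟨a₀, a₁, haa,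
   f 0, ⟨(hba 0).1, (hba 0).2, (hadj 0).1, (hadj 0).2⟩,
   f 1, ⟨(hba 1).1, (hba 1).2, hbb 1 0 (by decide), (hadj 1).1, (hadj 1).2⟩,
   f 2, ⟨(hba 2).1, (hba 2).2, hbb 2 0 (by decide), hbb 2 1 (by decide), (hadj 2).1, (hadj 2).2⟩,
   f 3, ⟨(hba 3).1, (hba 3).2, hbb 3 0 (by decide), hbb 3 1 (by decide), hbb 3 2 (by decide),
     (hadj 3).1, (hadj 3).2⟩⟩

lemma mkP2L (x y a₁ : Fin 7) (f : Fin 4 → Fin 7)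
    (hxy : x ≠ y) (hadjxy : GD.Adj x y)
    (ha1 : a₁ ≠ x ∧ a₁ ≠ y)
    (hb : ∀ j, f j ≠ x ∧ f j ≠ y ∧ f j ≠ a₁)
    (hbb : ∀ j k, j ≠ k → f j ≠ f k)
    (hmerge : ∀ j, GD.Adj x (f j) ∨ GD.Adj y (f j))
    (hab : ∀ j, GD.Adj a₁ (f j)) : P2L :=
  ⟨x, y, hxy, hadjxy, a₁, ha1,
   f 0, ⟨(hb 0).1, (hb 0).2.1, (hb 0).2.2, hmerge 0, hab 0⟩,
   f 1, ⟨(hb 1).1, (hb 1).2.1, (hb 1).2.2, hbb 1 0 (by decide), hmerge 1, hab 1⟩,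
   f 2, ⟨(hb 2).1, (hb 2).2.1, (hb 2).2.2, hbb 2 0 (by decide), hbb 2 1 (by decide),
     hmerge 2, hab 2⟩,
   f 3, ⟨(hb 3).1, (hb 3).2.1, (hb 3).2.2, hbb 3 0 (by decide), hbb 3 1 (by decide),
     hbb 3 2 (by decide), hmerge 3, hab 3⟩⟩

lemma mkP2R (x y a₀ a₁ : Fin 7) (f : Fin 3 → Fin 7)
    (hxy : x ≠ y) (hadjxy : GD.Adj x y)
    (ha0 : a₀ ≠ x ∧ a₀ ≠ y) (ha1 : a₁ ≠ x ∧ a₁ ≠ y) (haa : a₀ ≠ a₁)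
    (hm0 : GD.Adj a₀ x ∨ GD.Adj a₀ y) (hm1 : GD.Adj a₁ x ∨ GD.Adj a₁ y)
    (hb : ∀ j, f j ≠ x ∧ f j ≠ y ∧ f j ≠ a₀ ∧ f j ≠ a₁)
    (hbb : ∀ j k, j ≠ k → f j ≠ f k)
    (hab : ∀ j, GD.Adj a₀ (f j) ∧ GD.Adj a₁ (f j)) : P2R :=
  ⟨x, y, hxy, hadjxy, a₀, a₁, ⟨ha0.1, ha0.2, ha1.1, ha1.2, haa, hm0, hm1⟩,
   f 0, ⟨(hb 0).1, (hb 0).2.1, (hb 0).2.2.1, (hb 0).2.2.2, (hab 0).1, (hab 0).2⟩,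
   f 1, ⟨(hb 1).1, (hb 1).2.1, (hb 1).2.2.1, (hb 1).2.2.2, hbb 1 0 (by decide),
     (hab 1).1, (hab 1).2⟩,
   f 2, ⟨(hb 2).1, (hb 2).2.1, (hb 2).2.2.1, (hb 2).2.2.2, hbb 2 0 (by decide),
     hbb 2 1 (by decide), (hab 2).1, (hab 2).2⟩⟩

lemma hK24 : ∀ (i : Fin 2) (j : Fin 4), K24.Adj (Sum.inl i) (Sum.inr j) := by decide

/-- the three right indices other than `j` -/
def otherR (j : Fin 4) (k : Fin 3) : Fin 4 := if k.castSucc < j then k.castSucc else k.succ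

lemma otherR_ne : ∀ (j : Fin 4) (k : Fin 3), otherR j k ≠ j := by decide

lemma otherR_inj : ∀ (j : Fin 4) (k k' : Fin 3), k ≠ k' → otherR j k ≠ otherR j k' := by decide

end AuxGD
/-- Lemma 10: the graph `D` is `K_{2,4}`-minor-free. -/
theorem GD_K24MinorFree : MinorFree K24 GD := by
  rintro ⟨B, hconn, hdisj, hedge⟩
  classical

  -- finite branch sets
  let C : (Fin 2 ⊕ Fin 4) → Finset (Fin 7) := fun w => (Set.toFinite (B w)).toFinset
  have memC : ∀ w v, v ∈ C w ↔ v ∈ B w := fun w v => Set.Finite.mem_toFinset _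
  have coeC : ∀ w, ↑(C w) = B w := fun w => Set.Finite.coe_toFinset _
  -- representatives
  have hne : ∀ w, ∃ v, v ∈ B w := fun w => by
    obtain ⟨⟨v, hv⟩⟩ := (hconn w).nonempty
    exact ⟨v, hv⟩
  choose r hr using hne
  have rdisj : ∀ w₁ w₂, w₁ ≠ w₂ → r w₁ ≠ r w₂ := by
    intro w₁ w₂ h he
    exact Set.disjoint_left.mp (hdisj w₁ w₂ h) (hr w₁) (he ▸ hr w₂)
  -- cardinality bookkeeping
  have card1 : ∀ w, 1 ≤ (C w).card := fun w =>
    Finset.card_pos.mpr ⟨r w, (memC w (r w)).mpr (hr w)⟩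
  have disjC : ∀ w₁ w₂, w₁ ≠ w₂ → Disjoint (C w₁) (C w₂) := fun w₁ w₂ h =>
    Finset.disjoint_left.mpr fun {v} h1 h2 =>
      Set.disjoint_left.mp (hdisj w₁ w₂ h) ((memC _ _).mp h1) ((memC _ _).mp h2)
  have total : ∑ w : (Fin 2 ⊕ Fin 4), (C w).card ≤ 7 := by
    have h1 : ∑ w : (Fin 2 ⊕ Fin 4), (C w).card = (Finset.univ.biUnion C).card :=
      (Finset.card_biUnion fun w _ w' _ h => disjC w w' h).symm
    have h2 := Finset.card_le_univ (Finset.univ.biUnion C)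
    simp only [Fintype.card_fin] at h2
    omega
  have cardW : Fintype.card (Fin 2 ⊕ Fin 4) = 6 := by simp
  have pairBound : ∀ w₁ w₂, w₁ ≠ w₂ → (C w₁).card + (C w₂).card ≤ 3 := by
    intro w₁ w₂ h
    have hsum := Finset.sum_add_sum_compl ({w₁, w₂} : Finset (Fin 2 ⊕ Fin 4)) (fun w => (C w).card)
    have hpair : ∑ w ∈ ({w₁, w₂} : Finset (Fin 2 ⊕ Fin 4)), (C w).card = (C w₁).card + (C w₂).card :=
      Finset.sum_pair h
    have hcompl : (({w₁, w₂} : Finset (Fin 2 ⊕ Fin 4))ᶜ).card = 4 := by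
      rw [Finset.card_compl, Finset.card_pair h, cardW]
    have hge : (({w₁, w₂} : Finset (Fin 2 ⊕ Fin 4))ᶜ).card ≤ ∑ w ∈ ({w₁, w₂} : Finset (Fin 2 ⊕ Fin 4))ᶜ, (C w).card := by
      calc (({w₁, w₂} : Finset (Fin 2 ⊕ Fin 4))ᶜ).card = ∑ _w ∈ ({w₁, w₂} : Finset (Fin 2 ⊕ Fin 4))ᶜ, 1 := by simp
        _ ≤ _ := Finset.sum_le_sum fun w _ => card1 w
    omega
  have singleBound : ∀ w, (C w).card ≤ 2 := by
    intro w
    have hsum := Finset.sum_add_sum_compl ({w} : Finset (Fin 2 ⊕ Fin 4)) (fun w => (C w).card)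
    have hone : ∑ w' ∈ ({w} : Finset (Fin 2 ⊕ Fin 4)), (C w').card = (C w).card := Finset.sum_singleton _ _
    have hcompl : (({w} : Finset (Fin 2 ⊕ Fin 4))ᶜ).card = 5 := by
      rw [Finset.card_compl, Finset.card_singleton, cardW]
    have hge : (({w} : Finset (Fin 2 ⊕ Fin 4))ᶜ).card ≤ ∑ w' ∈ ({w} : Finset (Fin 2 ⊕ Fin 4))ᶜ, (C w').card := by
      calc (({w} : Finset (Fin 2 ⊕ Fin 4))ᶜ).card = ∑ _w ∈ ({w} : Finset (Fin 2 ⊕ Fin 4))ᶜ, 1 := by simp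
        _ ≤ _ := Finset.sum_le_sum fun w' _ => card1 w'
    omega
  have hsingle : ∀ w, (C w).card = 1 → B w = {r w} := by
    intro w hw
    obtain ⟨a, ha⟩ := Finset.card_eq_one.mp hw
    have hra : r w = a := by
      have := (memC w (r w)).mpr (hr w)
      rw [ha, Finset.mem_singleton] at this; exact this
    rw [← coeC w, ha, Finset.coe_singleton, hra]
  by_cases hex : ∃ w₀, 2 ≤ (C w₀).card
  · -- one branch set of size two, all others singletons
    obtain ⟨w₀, hw₀⟩ := hex
    have hc2 : (C w₀).card = 2 := le_antisymm (singleBound w₀) hw₀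
    obtain ⟨x, y, hxy, hCxy⟩ := Finset.card_eq_two.mp hc2
    have hBxy : B w₀ = {x, y} := by
      rw [← coeC w₀, hCxy]; simp
    have hadjxy : GD.Adj x y := by
      refine adj_of_connected_pair hxy ?_
      have := hconn w₀; rwa [hBxy] at this
    have hxmem : x ∈ B w₀ := by rw [hBxy]; simp
    have hymem : y ∈ B w₀ := by rw [hBxy]; simp
    have hothers : ∀ w, w ≠ w₀ → B w = {r w} := fun w hw =>
      hsingle w (by
        have h1 := pairBound w w₀ hw
        have h2 := card1 w
        omega)
    have hrnx : ∀ w, w ≠ w₀ → r w ≠ x ∧ r w ≠ y := by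
      intro w hw
      constructor <;> intro he
      · exact Set.disjoint_left.mp (hdisj w w₀ hw) (hr w) (he ▸ hxmem)
      · exact Set.disjoint_left.mp (hdisj w w₀ hw) (hr w) (he ▸ hymem)
    have hA1 : ∀ w₁ w₂, w₁ ≠ w₀ → w₂ ≠ w₀ → K24.Adj w₁ w₂ → GD.Adj (r w₁) (r w₂) := by
      intro w₁ w₂ h1 h2 hk
      obtain ⟨v₁, hv₁, v₂, hv₂, ha⟩ := hedge w₁ w₂ hk
      rw [hothers w₁ h1, Set.mem_singleton_iff] at hv₁
      rw [hothers w₂ h2, Set.mem_singleton_iff] at hv₂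
      rwa [hv₁, hv₂] at ha
    have hA2 : ∀ w, w ≠ w₀ → K24.Adj w w₀ → GD.Adj (r w) x ∨ GD.Adj (r w) y := by
      intro w hw hk
      obtain ⟨v₁, hv₁, v₂, hv₂, ha⟩ := hedge w w₀ hk
      rw [hothers w hw, Set.mem_singleton_iff] at hv₁
      rw [hBxy] at hv₂
      rcases hv₂ with hv₂ | hv₂
      · exact Or.inl (by rwa [hv₁, hv₂] at ha)
      · exact Or.inr (by rwa [hv₁, Set.mem_singleton_iff.mp hv₂] at ha)
    have hA3 : ∀ w, w ≠ w₀ → K24.Adj w₀ w → GD.Adj x (r w) ∨ GD.Adj y (r w) := by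
      intro w hw hk
      obtain ⟨v₁, hv₁, v₂, hv₂, ha⟩ := hedge w₀ w hk
      rw [hothers w hw, Set.mem_singleton_iff] at hv₂
      rw [hBxy] at hv₁
      rcases hv₁ with hv₁ | hv₁
      · exact Or.inl (by rwa [hv₁, hv₂] at ha)
      · exact Or.inr (by rwa [Set.mem_singleton_iff.mp hv₁, hv₂] at ha)
    have hrevne : ∀ i : Fin 2, (Sum.inl i.rev : Fin 2 ⊕ Fin 4) ≠ Sum.inl i := by decide
    rcases w₀ with i | j
    · -- the doubled branch is a left vertex
      refine notP (Or.inr (Or.inl (mkP2L x y (r (Sum.inl i.rev)) (fun j => r (Sum.inr j))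
        hxy hadjxy ?_ ?_ ?_ ?_ ?_)))
      · exact hrnx _ (hrevne i)
      · exact fun j => ⟨(hrnx _ (by simp)).1, (hrnx _ (by simp)).2, rdisj _ _ (by simp)⟩
      · exact fun j k h => rdisj _ _ (by simpa)
      · exact fun j => hA3 _ (by simp) (hK24 i j)
      · exact fun j => hA1 _ _ (hrevne i) (by simp) (hK24 _ j)
    · -- the doubled branch is a right vertex
      refine notP (Or.inr (Or.inr (mkP2R x y (r (Sum.inl 0)) (r (Sum.inl 1))
        (fun k => r (Sum.inr (otherR j k))) hxy hadjxy ?_ ?_ ?_ ?_ ?_ ?_ ?_ ?_)))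
      · exact hrnx _ (by simp)
      · exact hrnx _ (by simp)
      · exact rdisj _ _ (by simp)
      · exact hA2 _ (by simp) (hK24 0 j)
      · exact hA2 _ (by simp) (hK24 1 j)
      · exact fun k => ⟨(hrnx _ (by simp [otherR_ne j k])).1,
          (hrnx _ (by simp [otherR_ne j k])).2, rdisj _ _ (by simp), rdisj _ _ (by simp)⟩
      · exact fun k k' h => rdisj _ _ (by simp [otherR_inj j k k' h])
      · exact fun k => ⟨hA1 _ _ (by simp) (by simp [otherR_ne j k]) (hK24 _ _),
          hA1 _ _ (by simp) (by simp [otherR_ne j k]) (hK24 _ _)⟩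
  · -- all branch sets are singletons
    push_neg at hex
    have hall : ∀ w, B w = {r w} := fun w =>
      hsingle w (by
        have h1 := card1 w
        have h2 := hex w
        omega)
    have hA : ∀ w₁ w₂, K24.Adj w₁ w₂ → GD.Adj (r w₁) (r w₂) := by
      intro w₁ w₂ hk
      obtain ⟨v₁, hv₁, v₂, hv₂, ha⟩ := hedge w₁ w₂ hk
      rw [hall w₁, Set.mem_singleton_iff] at hv₁
      rw [hall w₂, Set.mem_singleton_iff] at hv₂
      rwa [hv₁, hv₂] at ha
    refine notP (Or.inl (mkP1 (r (Sum.inl 0)) (r (Sum.inl 1)) (fun j => r (Sum.inr j))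
      (rdisj _ _ (by simp)) ?_ ?_ ?_))
    · exact fun j => ⟨rdisj _ _ (by simp), rdisj _ _ (by simp)⟩
    · exact fun j k h => rdisj _ _ (by simpa)
    · exact fun j => ⟨hA _ _ (hK24 0 j), hA _ _ (hK24 1 j)⟩

end K24Paper
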